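/- arXiv:1109.3510 — 2 statements merged into one kernel-verified Lean document; each statement's English description precedes it below -/
import Mathlib

section
/- Let J, K be positive integers with K > J. Then for every function g : (Fin K → Bool) → (Fin J → Bool) there exist distinct information bit sequences b ≠ b′ in Fin K → Bool with g(b) = g(b′). In particular, in BICMB-OFDM with code rate R_c, S streams per subcarrier, and L channel taps, if R_c·S·L > 1 (so that the number K = J·R_c·S·L of information bits in a frame exceeds the number J of coded bits carried by any single subchannel of a single subcarrier), then for every encoder and interleaver there exist two distinct information sequences whose coded bits transmitted on the first subchannel of some subcarrier coincide; the corresponding error event has no distinct bits on that subchannel, so full diversity N_r·N_t·L cannot be achieved. -/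
/-- Pigeonhole underlying the necessity of the full diversity condition `R_c·S·L ≤ 1`:
if a frame carries `K` information bits but any single subchannel of a single subcarrier
carries only `J < K` coded bits, then for every map `g` sending an information bit
sequence to the `J` coded bits placed on that subchannel, two distinct information
sequences collide, so some error event places no distinct bit on that subchannel and
full diversity `N_r·N_t·L` is lost. -/
theorem full_diversity_necessity_pigeonhole (J K : ℕ) (hJ : 0 < J) (hK : J < K) :
    ∀ g : (Fin K → Bool) → (Fin J → Bool),
      ∃ b b' : Fin K → Bool, b ≠ b' ∧ g b = g b' := by
  intro g
  have hcard : Fintype.card (Fin J → Bool) < Fintype.card (Fin K → Bool) := by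
    simp only [Fintype.card_fun, Fintype.card_fin, Fintype.card_bool]
    exact Nat.pow_lt_pow_right one_lt_two hK
  obtain ⟨b, b', hne, heq⟩ := Fintype.exists_ne_map_eq_of_card_lt g hcard
  exact ⟨b, b', hne, heq⟩
end

section
/- Work in the ring R[[Z]] of formal power series over R = ℚ[a,b,c,d] (polynomials in four commuting indeterminates). Define the 6×6 matrix F over R[[Z]] with rows F₁ = (0,0,0,0,1,0), F₂ = (0,0,0,dZ,0,cZ), F₃ = (0,0,0,cZ,0,dZ), F₄ = (0,1,0,0,0,0), F₅ = (bZ,0,aZ,0,0,0), F₆ = (aZ,0,bZ,0,0,0); the column vector t = (cdZ², 0, 0, abZ², 0, 0)ᵀ; and the row vector g = (0, abZ², 0, 0, cdZ², 0). Then the matrix I − F is invertible over R[[Z]], and the scalar transfer function T = g·(I−F)^{−1}·t satisfies: the coefficient of Z⁵ in T equals a²b²d + bc²d², and the coefficient of Z⁶ in T equals 2a²bc²d + a²b²d² + b²c²d². -/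
/-!
Since `F² = Z • G` for a matrix `G` over `R[[Z]]`, the constant term of `F` squares to zero,
so `I - F` is invertible, and `F⁶ = Z³ • G³`. As `g` and `t` are divisible by `Z²`, the tail
`g (I - F)⁻¹ F⁶ t` of the Neumann series is divisible by `Z⁷`; the coefficients of `Z⁵` and
`Z⁶` are therefore those of the finite sum `∑_{k<6} g Fᵏ t`, i.e. of error events with at most
five state transitions, which is computed explicitly.
-/

noncomputable section

open MvPolynomial Matrix

/-- Coefficient ring: polynomials in the four stream indeterminates `a, b, c, d`. -/
abbrev TransferRing : Type := MvPolynomial (Fin 4) ℚ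

/-- The four stream indeterminates, viewed as constant power series. -/
def aS : PowerSeries TransferRing := PowerSeries.C (R := TransferRing) (X 0)
def bS : PowerSeries TransferRing := PowerSeries.C (R := TransferRing) (X 1)
def cS : PowerSeries TransferRing := PowerSeries.C (R := TransferRing) (X 2)
def dS : PowerSeries TransferRing := PowerSeries.C (R := TransferRing) (X 3)

/-- The Hamming-weight indeterminate `Z`. -/
def ZS : PowerSeries TransferRing := PowerSeries.X

/-- State-transition matrix `F` of the 4-state rate-1/2 convolutional code with the
4-stream spatial de-multiplexer. -/
def Fmat : Matrix (Fin 6) (Fin 6) (PowerSeries TransferRing) :=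
  !![0, 0, 0, 0, 1, 0;
     0, 0, 0, dS * ZS, 0, cS * ZS;
     0, 0, 0, cS * ZS, 0, dS * ZS;
     0, 1, 0, 0, 0, 0;
     bS * ZS, 0, aS * ZS, 0, 0, 0;
     aS * ZS, 0, bS * ZS, 0, 0, 0]

/-- Input (splitting) vector `t`. -/
def tvec : Fin 6 → PowerSeries TransferRing :=
  ![cS * dS * ZS ^ 2, 0, 0, aS * bS * ZS ^ 2, 0, 0]

/-- Output (merging) vector `g`. -/
def gvec : Fin 6 → PowerSeries TransferRing :=
  ![0, aS * bS * ZS ^ 2, 0, 0, cS * dS * ZS ^ 2, 0]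

namespace PowerSeries

theorem coeff_eq_of_X_pow_dvd_sub {R : Type*} [Ring R] {f g : PowerSeries R} {m N : ℕ}
    (h : PowerSeries.X ^ N ∣ f - g) (hm : m < N) : coeff m f = coeff m g := by
  rw [← sub_eq_zero, ← map_sub]
  exact X_pow_dvd_iff.mp h m hm

variable {R n : Type*} [CommRing R] [Fintype n] [DecidableEq n]

theorem isNilpotent_map_constantCoeff_of_pow_eq_X_smul {M G : Matrix n n (PowerSeries R)}
    {k : ℕ} (h : M ^ k = (PowerSeries.X : PowerSeries R) • G) :
    IsNilpotent (M.map constantCoeff) := by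
  refine ⟨k, ?_⟩
  rw [← RingHom.mapMatrix_apply, ← map_pow, h]
  ext i j
  simp

theorem isUnit_one_sub_of_isNilpotent_map_constantCoeff {M : Matrix n n (PowerSeries R)}
    (hM : IsNilpotent (M.map constantCoeff)) : IsUnit (1 - M) := by
  rw [Matrix.isUnit_iff_isUnit_det, isUnit_iff_constantCoeff, RingHom.map_det, map_sub, map_one,
    ← Matrix.isUnit_iff_isUnit_det]
  exact hM.isUnit_one_sub

end PowerSeries

namespace Matrix

variable {R m n : Type*} [Fintype n]

theorem dvd_mulVec_apply [CommSemiring R] {p : R} (A : Matrix m n R) {v : n → R}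
    (hv : ∀ j, p ∣ v j) (i : m) : p ∣ (A *ᵥ v) i :=
  Finset.dvd_sum fun j _ => (hv j).mul_left _

theorem mul_dvd_dotProduct [CommSemiring R] {p q : R} {u v : n → R} (hu : ∀ i, p ∣ u i)
    (hv : ∀ i, q ∣ v i) : p * q ∣ u ⬝ᵥ v :=
  Finset.dvd_sum fun i _ => mul_dvd_mul (hu i) (hv i)

theorem nonsing_inv_one_sub_eq_geom_sum_add [CommRing R] [DecidableEq n] {M : Matrix n n R}
    (hM : IsUnit (1 - M)) (N : ℕ) :
    (1 - M)⁻¹ = ∑ k ∈ Finset.range N, M ^ k + (1 - M)⁻¹ * M ^ N := by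
  rw [← nonsing_inv_mul_cancel_left _ (∑ k ∈ Finset.range N, M ^ k)
      ((isUnit_iff_isUnit_det _).mp hM), mul_neg_geom_sum, Matrix.mul_sub, Matrix.mul_one,
    sub_add_cancel]

end Matrix

theorem Fmat_sq_eq_ZS_smul : ∃ G, Fmat ^ 2 = ZS • G :=
  ⟨!![bS, 0, aS, 0, 0, 0;
      aS * cS * ZS, dS, bS * cS * ZS, 0, 0, 0;
      aS * dS * ZS, cS, bS * dS * ZS, 0, 0, 0;
      0, 0, 0, dS, 0, cS;
      0, 0, 0, aS * cS * ZS, bS, aS * dS * ZS;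
      0, 0, 0, bS * cS * ZS, aS, bS * dS * ZS], by
    ext i j : 1
    fin_cases i <;> fin_cases j <;>
      simp [sq, Fmat, Matrix.mul_apply, Fin.sum_univ_six] <;> ring⟩

theorem isUnit_one_sub_Fmat : IsUnit (1 - Fmat) :=
  have ⟨_, hG⟩ := Fmat_sq_eq_ZS_smul
  PowerSeries.isUnit_one_sub_of_isNilpotent_map_constantCoeff
    (PowerSeries.isNilpotent_map_constantCoeff_of_pow_eq_X_smul hG)

theorem ZS_sq_dvd_tvec (i : Fin 6) : ZS ^ 2 ∣ tvec i := by
  fin_cases i <;> simp [tvec]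

theorem ZS_sq_dvd_gvec (i : Fin 6) : ZS ^ 2 ∣ gvec i := by
  fin_cases i <;> simp [gvec]

theorem ZS_pow_five_dvd_Fmat_pow_six_mulVec_tvec (i : Fin 6) :
    ZS ^ 5 ∣ (Fmat ^ 6 *ᵥ tvec) i := by
  obtain ⟨G, hG⟩ := Fmat_sq_eq_ZS_smul
  rw [show Fmat ^ 6 = (Fmat ^ 2) ^ 3 by rw [← pow_mul], hG, smul_pow, Matrix.smul_mulVec,
    Pi.smul_apply, smul_eq_mul, show 5 = 3 + 2 from rfl, pow_add]
  exact mul_dvd_mul_left _ (Matrix.dvd_mulVec_apply _ ZS_sq_dvd_tvec i)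

theorem gvec_dotProduct_geom_sum_mulVec_tvec :
    gvec ⬝ᵥ ((∑ k ∈ Finset.range 6, Fmat ^ k) *ᵥ tvec) =
      PowerSeries.C (X 0 ^ 2 * X 1 ^ 2 * X 3 + X 1 * X 2 ^ 2 * X 3 ^ 2) * ZS ^ 5 +
      PowerSeries.C (2 * X 0 ^ 2 * X 1 * X 2 ^ 2 * X 3 + X 0 ^ 2 * X 1 ^ 2 * X 3 ^ 2 +
        X 1 ^ 2 * X 2 ^ 2 * X 3 ^ 2) * ZS ^ 6 +
      ZS ^ 7 * (PowerSeries.C (X 1 ^ 3 * X 2 ^ 2 * X 3 ^ 2 + X 0 ^ 2 * X 2 ^ 2 * X 3 ^ 3 +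
          2 * X 0 ^ 2 * X 1 * X 2 ^ 2 * X 3 ^ 2 + X 0 ^ 2 * X 1 ^ 2 * X 3 ^ 3 +
          2 * X 0 ^ 2 * X 1 ^ 2 * X 2 ^ 2 * X 3 + X 0 ^ 2 * X 1 ^ 3 * X 2 ^ 2) +
        PowerSeries.C (X 0 ^ 2 * X 2 ^ 4 * X 3 ^ 2 + 2 * X 0 ^ 2 * X 1 * X 2 ^ 2 * X 3 ^ 3 +
          2 * X 0 ^ 2 * X 1 ^ 2 * X 2 ^ 2 * X 3 ^ 2 + 2 * X 0 ^ 2 * X 1 ^ 3 * X 2 ^ 2 * X 3 +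
          X 0 ^ 4 * X 1 ^ 2 * X 2 ^ 2) * ZS +
        PowerSeries.C (X 0 ^ 2 * X 1 * X 2 ^ 2 * X 3 ^ 4 + X 0 ^ 2 * X 1 ^ 4 * X 2 ^ 2 * X 3) *
          ZS ^ 2) := by
  simp only [Finset.sum_range_succ, Finset.sum_range_zero, zero_add, Matrix.add_mulVec,
    pow_succ', pow_zero, ← Matrix.mulVec_mulVec, Matrix.one_mulVec]
  simp [Fmat, tvec, gvec, dotProduct, Fin.sum_univ_six, aS, bS, cS, dS,
    Matrix.vecHead, Matrix.vecTail, _root_.map_ofNat]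
  ring

theorem transfer_function_sub_dvd :
    ZS ^ 7 ∣ gvec ⬝ᵥ ((1 - Fmat)⁻¹ *ᵥ tvec) -
      (PowerSeries.C (X 0 ^ 2 * X 1 ^ 2 * X 3 + X 1 * X 2 ^ 2 * X 3 ^ 2) * ZS ^ 5 +
        PowerSeries.C (2 * X 0 ^ 2 * X 1 * X 2 ^ 2 * X 3 + X 0 ^ 2 * X 1 ^ 2 * X 3 ^ 2 +
          X 1 ^ 2 * X 2 ^ 2 * X 3 ^ 2) * ZS ^ 6) := by
  have tail_dvd : ZS ^ 7 ∣ gvec ⬝ᵥ ((1 - Fmat)⁻¹ *ᵥ (Fmat ^ 6 *ᵥ tvec)) := by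
    rw [show 7 = 2 + 5 from rfl, pow_add]
    exact Matrix.mul_dvd_dotProduct ZS_sq_dvd_gvec
      (Matrix.dvd_mulVec_apply _ ZS_pow_five_dvd_Fmat_pow_six_mulVec_tvec)
  rw [Matrix.nonsing_inv_one_sub_eq_geom_sum_add isUnit_one_sub_Fmat 6, Matrix.add_mulVec,
    dotProduct_add, gvec_dotProduct_geom_sum_mulVec_tvec, ← Matrix.mulVec_mulVec,
    add_sub_right_comm, add_sub_cancel_left]
  exact dvd_add (dvd_mul_right _ _) tail_dvd

/-- The matrix `I - F` is invertible over the power series ring, and the transfer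
function `T = g (I - F)⁻¹ t` has `Z⁵`-coefficient `a²b²d + bc²d²` and
`Z⁶`-coefficient `2a²bc²d + a²b²d² + b²c²d²`. -/
theorem transfer_function_coefficients :
    IsUnit (1 - Fmat) ∧
    PowerSeries.coeff (R := TransferRing) 5 (gvec ⬝ᵥ ((1 - Fmat)⁻¹ *ᵥ tvec)) =
      (X 0) ^ 2 * (X 1) ^ 2 * (X 3) + (X 1) * (X 2) ^ 2 * (X 3) ^ 2 ∧
    PowerSeries.coeff (R := TransferRing) 6 (gvec ⬝ᵥ ((1 - Fmat)⁻¹ *ᵥ tvec)) =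
      2 * (X 0) ^ 2 * (X 1) * (X 2) ^ 2 * (X 3) +
        (X 0) ^ 2 * (X 1) ^ 2 * (X 3) ^ 2 + (X 1) ^ 2 * (X 2) ^ 2 * (X 3) ^ 2 := by
  refine ⟨isUnit_one_sub_Fmat, ?_, ?_⟩ <;>
    rw [PowerSeries.coeff_eq_of_X_pow_dvd_sub transfer_function_sub_dvd (by norm_num)] <;>
    simp only [ZS, LinearMap.map_add, PowerSeries.coeff_C_mul_X_pow] <;> norm_num

end
end
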